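/- Let f : ℝ → ℝ be continuous with |f(x)| ≤ a·cosh(b·x) for all x (a > 0, b ∈ ℝ), let λ > 0, and let ρ be a compactly supported probability measure on ℝ. For a function g : ℝ → ℝ define F^g(x) = Σ_{n=0}^∞ (e^{−λ} λ^n / (n+1)!) · ∫ g d(δ_x ∗ ρ^{∗n}) and G^g = Σ_{n=0}^∞ (e^{−λ} λ^n / (n+1)!) · ∫ g d(ρ^{∗(n+1)}). Then there exists a sequence (p_k) of real trigonometric polynomials such that sup_{x ∈ supp ρ} |F^{p_k}(x) − F^f(x)| → 0 and G^{p_k} → G^f as k → ∞. -/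

import Mathlib

open MeasureTheory Filter

/-- The `n`-fold convolution power of a measure on `ℝ`, with `ρ^{∗0} = δ₀`. -/
noncomputable def convPow (ρ : Measure ℝ) : ℕ → Measure ℝ
  | 0 => Measure.dirac 0
  | n + 1 => (convPow ρ n).conv ρ

/-- The topological support of a measure on `ℝ`. -/
def msupp (μ : Measure ℝ) : Set ℝ := {x | ∀ U ∈ nhds x, μ U ≠ 0}

/-- A real trigonometric polynomial of some period `T > 0`: a finite real linear
combination of `1`, `cos(2πkx/T)` and `sin(2πkx/T)`. -/
def IsTrigPoly (p : ℝ → ℝ) : Prop :=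
  ∃ (T : ℝ) (m : ℕ) (c s : ℕ → ℝ), 0 < T ∧
    ∀ x, p x = c 0 + ∑ k ∈ Finset.Icc 1 m,
      (c k * Real.cos (2 * Real.pi * k * x / T) +
       s k * Real.sin (2 * Real.pi * k * x / T))

/-- `F^g(x) = Σ_{n=0}^∞ (e^{−λ} λ^n / (n+1)!) · ∫ g d(δ_x ∗ ρ^{∗n})`. -/
noncomputable def meanFitnessAt (g : ℝ → ℝ) (l : ℝ) (ρ : Measure ℝ) (x : ℝ) : ℝ :=
  ∑' n : ℕ, Real.exp (-l) * l ^ n / (n + 1).factorial *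
    ∫ y, g y ∂((Measure.dirac x).conv (convPow ρ n))

/-- `G^g = Σ_{n=0}^∞ (e^{−λ} λ^n / (n+1)!) · ∫ g d(ρ^{∗(n+1)})`. -/
noncomputable def meanFitness (g : ℝ → ℝ) (l : ℝ) (ρ : Measure ℝ) : ℝ :=
  ∑' n : ℕ, Real.exp (-l) * l ^ n / (n + 1).factorial *
    ∫ y, g y ∂(convPow ρ (n + 1))

/-!
Take `M > 0` with `supp ρ ⊆ [-M, M]`. For `x ∈ supp ρ` the measures `δ_x ∗ ρ^{∗n}` and
`ρ^{∗(n+1)}` live on `[-(n+1)M, (n+1)M]`, where `|f| ≤ A_n := a e^{|b|(n+1)M}`. Composing `f`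
with a triangle wave turns its restriction to `[-(k+1)M, (k+1)M]` into a continuous periodic
function, and density of Fourier polynomials gives a real trigonometric polynomial `p_k` within
`1/(k+1)` of `f` on that interval and bounded by `A_k + 1` everywhere. With the weights
`w_n = e^{-λ} λ^n / (n+1)!`, the `n`-th terms of the series for `p_k` and `f` therefore differ
by at most `|w_n|/(k+1)` for `n ≤ k` and by `|w_n| (2A_n + 1)` for `n > k`, uniformly in `x`.
As `Σ |w_n| A_n < ∞` (the factorial in `w_n` beats the exponential growth of `A_n`), Tannery's
theorem sends the total error to zero.
-/

open Real Set Topology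

lemma Finset.sum_Icc_neg_natCast {M : Type*} [AddCommMonoid M] (g : ℤ → M) (m : ℕ) :
    ∑ n ∈ Finset.Icc (-(m : ℤ)) m, g n = g 0 + ∑ k ∈ Finset.Icc 1 m, (g k + g (-k)) := by
  induction m with
  | zero => simp
  | succ m ih =>
    have hIcc : Finset.Icc (-((m + 1 : ℕ) : ℤ)) (m + 1 : ℕ) =
        insert (-((m + 1 : ℕ) : ℤ)) (insert ((m + 1 : ℕ) : ℤ) (Finset.Icc (-(m : ℤ)) m)) := by
      ext n; simp only [Finset.mem_Icc, Finset.mem_insert]; omega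
    rw [hIcc, Finset.sum_insert (by simp only [Finset.mem_insert, Finset.mem_Icc]; omega),
      Finset.sum_insert (by simp), Finset.sum_Icc_succ_top (by omega), ih]
    abel

lemma IsTrigPoly.continuous {p : ℝ → ℝ} (hp : IsTrigPoly p) : Continuous p := by
  obtain ⟨T, m, c, s, -, hp⟩ := hp
  rw [funext hp]
  fun_prop

lemma re_mul_fourier_coe {T : ℝ} (c : ℂ) (n : ℤ) (x : ℝ) :
    (c * fourier n (x : AddCircle T)).re =
      c.re * cos (2 * π * n * x / T) - c.im * sin (2 * π * n * x / T) := by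
  have : 2 * π * Complex.I * n * x / T = ((2 * π * n * x / T : ℝ) : ℂ) * Complex.I := by
    push_cast; ring
  rw [fourier_coe_apply, this, Complex.mul_re, Complex.exp_ofReal_mul_I_re,
    Complex.exp_ofReal_mul_I_im]

lemma isTrigPoly_re_of_mem_span_fourier {T : ℝ} (hT : 0 < T) {q : C(AddCircle T, ℂ)}
    (hq : q ∈ Submodule.span ℂ (range (fourier (T := T)))) :
    IsTrigPoly fun x : ℝ => (q x).re := by
  obtain ⟨c, rfl⟩ := Finsupp.mem_span_range_iff_exists_finsupp.mp hq
  set m := c.support.sup Int.natAbs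
  refine ⟨T, m, fun k => if k = 0 then (c 0).re else (c k).re + (c (-k)).re,
    fun k => (c (-k)).im - (c k).im, hT, fun x => ?_⟩
  have hsupp : c.support ⊆ Finset.Icc (-(m : ℤ)) m := fun n hn => by
    have := Finset.le_sup (f := Int.natAbs) hn
    simp only [Finset.mem_Icc]; omega
  simp only [Finsupp.sum, ContinuousMap.coe_sum, ContinuousMap.coe_smul, Finset.sum_apply,
    Pi.smul_apply, smul_eq_mul, Complex.re_sum]
  rw [Finset.sum_subset hsupp fun n _ hn => by simp [Finsupp.notMem_support_iff.mp hn],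
    Finset.sum_Icc_neg_natCast]
  refine congrArg₂ (· + ·) (by simp) (Finset.sum_congr rfl fun k hk => ?_)
  have hk : k ≠ 0 := by simp only [Finset.mem_Icc] at hk; omega
  simp only [re_mul_fourier_coe, if_neg hk, Int.cast_neg, Int.cast_natCast, neg_mul, mul_neg,
    neg_div, Real.cos_neg, Real.sin_neg]
  ring

lemma Function.Periodic.exists_isTrigPoly_abs_sub_lt {g : ℝ → ℝ} {T : ℝ} (hT : 0 < T)
    (hg : Continuous g) (hper : Function.Periodic g T) {ε : ℝ} (hε : 0 < ε) :
    ∃ p, IsTrigPoly p ∧ ∀ x, |p x - g x| < ε := by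
  have := Fact.mk hT
  let G : C(AddCircle T, ℂ) :=
    ⟨(hper.comp Complex.ofReal).lift,
      continuous_coinduced_dom.mpr (Complex.continuous_ofReal.comp hg)⟩
  have hG : G ∈ closure (Submodule.span ℂ (range (fourier (T := T))) :
      Set C(AddCircle T, ℂ)) := by
    rw [← Submodule.topologicalClosure_coe, span_fourier_closure_eq_top]
    trivial
  obtain ⟨q, hq, hGq⟩ := Metric.mem_closure_iff.mp hG ε hε
  refine ⟨fun x => (q x).re, isTrigPoly_re_of_mem_span_fourier hT hq, fun x => ?_⟩
  calc |(q x).re - g x| = |(q x - G x).re| := by simp [G]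
    _ ≤ ‖q x - G x‖ := Complex.abs_re_le_norm _
    _ = dist (G x) (q x) := by rw [dist_comm, dist_eq_norm]
    _ ≤ dist G q := ContinuousMap.dist_apply_le_dist _
    _ < ε := hGq

lemma exists_continuous_periodic_eq_self {R : ℝ} (hR : 0 < R) :
    ∃ φ : ℝ → ℝ, Continuous φ ∧ Function.Periodic φ (4 * R) ∧ (∀ x, |x| ≤ R → φ x = x) ∧
      ∀ x, |φ x| ≤ R := by
  refine ⟨fun x => 2 * R / π * arcsin (sin (π / (2 * R) * x)), by fun_prop, fun x => ?_,
    fun x hx => ?_, fun x => ?_⟩ <;> dsimp only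
  · rw [show π / (2 * R) * (x + 4 * R) = π / (2 * R) * x + 2 * π by field_simp; ring,
      sin_add_two_pi]
  · have hx' : |π / (2 * R) * x| ≤ π / 2 := by
      rw [abs_mul, abs_of_pos (by positivity)]
      calc π / (2 * R) * |x| ≤ π / (2 * R) * R := by gcongr
        _ = π / 2 := by field_simp
    rw [arcsin_sin (abs_le.mp hx').1 (abs_le.mp hx').2]
    field_simp
  · have : |arcsin (sin (π / (2 * R) * x))| ≤ π / 2 :=
      abs_le.mpr ⟨neg_pi_div_two_le_arcsin _, arcsin_le_pi_div_two _⟩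
    rw [abs_mul, abs_of_pos (by positivity)]
    calc 2 * R / π * |arcsin (sin (π / (2 * R) * x))| ≤ 2 * R / π * (π / 2) := by gcongr
      _ = R := by field_simp

lemma exists_isTrigPoly_approx {f : ℝ → ℝ} (hf : Continuous f) {R ε C : ℝ} (hR : 0 < R)
    (hε : 0 < ε) (hC : ∀ x, |x| ≤ R → |f x| ≤ C) :
    ∃ p, IsTrigPoly p ∧ (∀ x, |x| ≤ R → |p x - f x| ≤ ε) ∧ ∀ x, |p x| ≤ C + ε := by
  obtain ⟨φ, hφ, hφ_per, hφ_eq, hφ_le⟩ := exists_continuous_periodic_eq_self hR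
  obtain ⟨p, hp, hpf⟩ :=
    (hφ_per.comp f).exists_isTrigPoly_abs_sub_lt (by positivity) (hf.comp hφ) hε
  refine ⟨p, hp, fun x hx => by simpa [hφ_eq x hx] using (hpf x).le, fun x => ?_⟩
  calc |p x| = |(p x - f (φ x)) + f (φ x)| := by rw [sub_add_cancel]
    _ ≤ |p x - f (φ x)| + |f (φ x)| := abs_add_le _ _
    _ ≤ ε + C := add_le_add (hpf x).le (hC _ (hφ_le x))
    _ = C + ε := add_comm _ _

lemma MeasureTheory.Measure.ae_conv_of_ae {M : Type*} [AddMonoid M] [MeasurableSpace M]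
    [MeasurableAdd₂ M] {μ ν : Measure M} {p q r : M → Prop} (hr : MeasurableSet {z | r z})
    (hμ : ∀ᵐ x ∂μ, p x) (hν : ∀ᵐ y ∂ν, q y) (h : ∀ x y, p x → q y → r (x + y)) :
    ∀ᵐ z ∂μ.conv ν, r z := by
  rw [Measure.conv, ae_map_iff measurable_add.aemeasurable hr]
  filter_upwards [Measure.quasiMeasurePreserving_fst.ae hμ,
    Measure.quasiMeasurePreserving_snd.ae hν] with z hx hy using h _ _ hx hy

instance isProbabilityMeasure_convPow (ρ : Measure ℝ) [IsProbabilityMeasure ρ] (n : ℕ) :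
    IsProbabilityMeasure (convPow ρ n) := by
  induction n with
  | zero => exact Measure.dirac.isProbabilityMeasure
  | succ n ih => exact Measure.probabilitymeasure_of_probabilitymeasures_conv _ _

lemma measurableSet_abs_le (r : ℝ) : MeasurableSet {y : ℝ | |y| ≤ r} :=
  measurableSet_le measurable_abs measurable_const

lemma ae_abs_le_convPow {ρ : Measure ℝ} {M : ℝ} (hρ : ∀ᵐ x ∂ρ, |x| ≤ M) (n : ℕ) :
    ∀ᵐ y ∂convPow ρ n, |y| ≤ n * M := by
  induction n with
  | zero => simp [convPow, ae_dirac_eq]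
  | succ n ih =>
    refine Measure.ae_conv_of_ae (measurableSet_abs_le _) ih hρ fun x y hx hy => ?_
    push_cast
    linarith [abs_add_le x y]

lemma ae_abs_le_dirac_conv_convPow {ρ : Measure ℝ} {M x : ℝ} (hρ : ∀ᵐ x ∂ρ, |x| ≤ M)
    (hx : |x| ≤ M) (n : ℕ) : ∀ᵐ y ∂(Measure.dirac x).conv (convPow ρ n), |y| ≤ (n + 1) * M :=
  Measure.ae_conv_of_ae (p := fun z => |z| ≤ M) (measurableSet_abs_le _)
    (by simpa [ae_dirac_eq] using hx) (ae_abs_le_convPow hρ n) fun x y hx hy => by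
      linarith [abs_add_le x y]

lemma msupp_subset_of_ae_mem {μ : Measure ℝ} {s : Set ℝ} (hs : IsClosed s)
    (h : ∀ᵐ x ∂μ, x ∈ s) : msupp μ ⊆ s := fun _ hx => by
  by_contra hxs
  exact hx _ (hs.isOpen_compl.mem_nhds hxs) h

lemma abs_integral_le_of_ae_abs_le {μ : Measure ℝ} [IsProbabilityMeasure μ] {g : ℝ → ℝ}
    {C : ℝ} (h : ∀ᵐ y ∂μ, |g y| ≤ C) : |∫ y, g y ∂μ| ≤ C := by
  have := norm_integral_le_of_norm_le_const (μ := μ) (f := g) (by simpa using h)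
  rwa [probReal_univ, mul_one, Real.norm_eq_abs] at this

lemma abs_tsum_mul_integral_sub_le {w E : ℕ → ℝ} {μ : ℕ → Measure ℝ}
    [∀ n, IsProbabilityMeasure (μ n)] {g f : ℝ → ℝ}
    (hg : ∀ n, Integrable g (μ n)) (hf : ∀ n, Integrable f (μ n))
    (hfw : Summable fun n => w n * ∫ y, f y ∂μ n)
    (hE : ∀ n, ∀ᵐ y ∂μ n, |g y - f y| ≤ E n) (hwE : Summable fun n => |w n| * E n) :
    |∑' n, w n * ∫ y, g y ∂μ n - ∑' n, w n * ∫ y, f y ∂μ n| ≤ ∑' n, |w n| * E n := by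
  have hd : ∀ n, ‖w n * ∫ y, g y ∂μ n - w n * ∫ y, f y ∂μ n‖ ≤ |w n| * E n := fun n => by
    rw [Real.norm_eq_abs, ← mul_sub, ← integral_sub (hg n) (hf n), abs_mul]
    exact mul_le_mul_of_nonneg_left (abs_integral_le_of_ae_abs_le (hE n)) (abs_nonneg _)
  have hdw := (Summable.of_norm_bounded hwE hd).add hfw
  simp only [sub_add_cancel] at hdw
  rw [← hdw.tsum_sub hfw]
  exact tsum_of_norm_bounded hwE.hasSum hd

lemma exists_isTrigPoly_seq_abs_sub_le {f : ℝ → ℝ} (hf : Continuous f) {r A : ℕ → ℝ}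
    (hr : ∀ n, 0 < r n) (hr_mono : Monotone r) (hA_mono : Monotone A)
    (hfA : ∀ n y, |y| ≤ r n → |f y| ≤ A n) :
    ∃ p : ℕ → ℝ → ℝ, (∀ k, IsTrigPoly (p k)) ∧ (∀ k y, |p k y| ≤ A k + 1) ∧
      ∀ k n y, |y| ≤ r n → |p k y - f y| ≤ if n ≤ k then 1 / ((k : ℝ) + 1) else 2 * A n + 1 := by
  choose p hp hpf hpA using fun k : ℕ =>
    exists_isTrigPoly_approx hf (hr k) Nat.one_div_pos_of_nat (hfA k)
  have hpA' : ∀ k y, |p k y| ≤ A k + 1 := fun k y =>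
    (hpA k y).trans (add_le_add_right (div_le_one_of_le₀ (by simp) (by positivity)) _)
  refine ⟨p, hp, hpA', fun k n y hy => ?_⟩
  split_ifs with hnk
  · exact hpf k y (hy.trans (hr_mono hnk))
  · calc |p k y - f y| ≤ |p k y| + |f y| := abs_sub _ _
      _ ≤ A k + 1 + A n := add_le_add (hpA' k y) (hfA n y hy)
      _ ≤ 2 * A n + 1 := by linarith [hA_mono (show k ≤ n by omega)]

lemma abs_ite_one_div_succ_le {B : ℝ} (hB : 1 ≤ B) (k n : ℕ) :
    |if n ≤ k then 1 / ((k : ℝ) + 1) else B| ≤ B := by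
  split_ifs
  · rw [abs_of_pos (by positivity)]
    exact (div_le_one_of_le₀ (by simp) (by positivity)).trans hB
  · exact (abs_of_pos (by linarith)).le

lemma tendsto_tsum_mul_ite_one_div_succ {w B : ℕ → ℝ} (hB : ∀ n, 1 ≤ B n)
    (hwB : Summable fun n => |w n| * B n) :
    Tendsto (fun k : ℕ => ∑' n, |w n| * if n ≤ k then 1 / ((k : ℝ) + 1) else B n)
      atTop (𝓝 0) := by
  rw [← tsum_zero]
  refine tendsto_tsum_of_dominated_convergence hwB (fun n => ?_)
    (Eventually.of_forall fun k n => ?_)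
  · rw [← mul_zero |w n|]
    refine (tendsto_one_div_add_atTop_nhds_zero_nat.congr' ?_).const_mul _
    filter_upwards [eventually_ge_atTop n] with k hk
    rw [if_pos hk]
  · rw [Real.norm_eq_abs, abs_mul, abs_abs]
    exact mul_le_mul_of_nonneg_left (abs_ite_one_div_succ_le (hB n) k n) (abs_nonneg _)

lemma exists_isTrigPoly_tsum_integral_approx {f : ℝ → ℝ} (hf : Continuous f) {w r A : ℕ → ℝ}
    (hr : ∀ n, 0 < r n) (hr_mono : Monotone r) (hA_mono : Monotone A)
    (hfA : ∀ n y, |y| ≤ r n → |f y| ≤ A n) (hw : Summable fun n => |w n|)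
    (hwA : Summable fun n => |w n| * A n) :
    ∃ p : ℕ → ℝ → ℝ, (∀ k, IsTrigPoly (p k)) ∧ ∃ δ : ℕ → ℝ, Tendsto δ atTop (𝓝 0) ∧
      ∀ k (μ : ℕ → Measure ℝ), (∀ n, IsProbabilityMeasure (μ n)) →
        (∀ n, ∀ᵐ y ∂μ n, |y| ≤ r n) →
        |∑' n, w n * ∫ y, p k y ∂μ n - ∑' n, w n * ∫ y, f y ∂μ n| ≤ δ k := by
  obtain ⟨p, hp, hpA, hpf⟩ := exists_isTrigPoly_seq_abs_sub_le hf hr hr_mono hA_mono hfA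
  have hA : ∀ n, 0 ≤ A n := fun n => (abs_nonneg _).trans (hfA n 0 (by simpa using (hr n).le))
  have hwB : Summable fun n => |w n| * (2 * A n + 1) := by
    simpa [mul_add, mul_left_comm _ (2 : ℝ)] using (hwA.mul_left 2).add hw
  refine ⟨p, hp, _, tendsto_tsum_mul_ite_one_div_succ (fun n => by linarith [hA n]) hwB,
    fun k μ hμ hμr => abs_tsum_mul_integral_sub_le (fun n => ?_) (fun n => ?_) ?_
      (fun n => (hμr n).mono fun y hy => hpf k n y hy) ?_⟩
  · exact Integrable.of_bound (hp k).continuous.aestronglyMeasurable (A k + 1)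
      (Eventually.of_forall fun y => by simpa using hpA k y)
  · exact Integrable.of_bound hf.aestronglyMeasurable (A n)
      ((hμr n).mono fun y hy => by simpa using hfA n y hy)
  · refine hwA.of_norm_bounded fun n => ?_
    rw [Real.norm_eq_abs, abs_mul]
    exact mul_le_mul_of_nonneg_left
      (abs_integral_le_of_ae_abs_le ((hμr n).mono fun y hy => hfA n y hy)) (abs_nonneg _)
  · refine hwB.of_norm_bounded fun n => ?_
    rw [Real.norm_eq_abs, abs_mul, abs_abs]
    exact mul_le_mul_of_nonneg_left (abs_ite_one_div_succ_le (by linarith [hA n]) k n)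
      (abs_nonneg _)

lemma summable_pow_div_factorial_succ (x : ℝ) :
    Summable fun n : ℕ => x ^ n / (n + 1).factorial :=
  (summable_pow_div_factorial |x|).of_norm_bounded fun n => by
    rw [Real.norm_eq_abs, abs_div, abs_pow, Nat.abs_cast]
    gcongr
    exact Nat.le_succ n

lemma summable_abs_exp_neg_mul_pow_div_factorial_mul_exp (l c : ℝ) :
    Summable fun n : ℕ => |exp (-l) * l ^ n / (n + 1).factorial| * exp (c * (n + 1)) := by
  refine ((summable_pow_div_factorial_succ (|l| * exp c)).mul_left
    (exp (-l) * exp c)).congr fun n => ?_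
  rw [abs_div, abs_mul, abs_pow, abs_exp, Nat.abs_cast,
    show c * (n + 1) = n * c + c by ring, exp_add, exp_nat_mul, mul_pow]
  ring

lemma nonneg_of_abs_le_mul_cosh {f : ℝ → ℝ} {a b : ℝ}
    (hbound : ∀ x, |f x| ≤ a * cosh (b * x)) : 0 ≤ a := by
  simpa using (abs_nonneg _).trans (hbound 0)

lemma abs_le_mul_exp_of_abs_le_mul_cosh {f : ℝ → ℝ} {a b : ℝ}
    (hbound : ∀ x, |f x| ≤ a * cosh (b * x)) {R y : ℝ} (hy : |y| ≤ R) :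
    |f y| ≤ a * exp (|b| * R) := by
  have ha := nonneg_of_abs_le_mul_cosh hbound
  have hcosh : cosh (b * y) ≤ exp |b * y| := by
    rw [← cosh_abs, cosh_eq]
    linarith [exp_le_exp.mpr (neg_le_self (abs_nonneg (b * y)))]
  calc |f y| ≤ a * cosh (b * y) := hbound y
    _ ≤ a * exp (|b| * R) := by
      gcongr
      exact hcosh.trans (exp_le_exp.mpr (by rw [abs_mul]; gcongr))

theorem fourier_approximation_of_fitness_general
    (f : ℝ → ℝ) (hf : Continuous f)
    (a b : ℝ)
    (hbound : ∀ x, |f x| ≤ a * Real.cosh (b * x))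
    (l : ℝ)
    (ρ : Measure ℝ) (hρ : IsProbabilityMeasure ρ)
    (K : Set ℝ) (hK : IsCompact K) (hsupp : ρ Kᶜ = 0) :
    ∃ p : ℕ → (ℝ → ℝ),
      (∀ k, IsTrigPoly (p k)) ∧
      TendstoUniformlyOn (fun k x => meanFitnessAt (p k) l ρ x)
        (meanFitnessAt f l ρ) atTop (msupp ρ) ∧
      Tendsto (fun k => meanFitness (p k) l ρ) atTop
        (nhds (meanFitness f l ρ)) := by
  obtain ⟨M, hM, hKM⟩ := hK.isBounded.exists_pos_norm_le
  have hρM : ∀ᵐ x ∂ρ, |x| ≤ M := measure_mono_null (fun x hx h => hx (hKM x h)) hsupp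
  have hsuppM : ∀ x ∈ msupp ρ, |x| ≤ M :=
    msupp_subset_of_ae_mem (isClosed_le continuous_abs continuous_const) hρM
  have ha := nonneg_of_abs_le_mul_cosh hbound
  obtain ⟨p, hp, δ, hδ, hpδ⟩ := exists_isTrigPoly_tsum_integral_approx hf
    (w := fun n => exp (-l) * l ^ n / (n + 1).factorial) (r := fun n => (n + 1) * M)
    (A := fun n => a * exp (|b| * ((n + 1) * M)))
    (fun n => by positivity) (fun m n hmn => by dsimp only; gcongr)
    (fun m n hmn => by dsimp only; gcongr)
    (fun n y hy => abs_le_mul_exp_of_abs_le_mul_cosh hbound hy)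
    (by simpa using summable_abs_exp_neg_mul_pow_div_factorial_mul_exp l 0)
    (((summable_abs_exp_neg_mul_pow_div_factorial_mul_exp l (|b| * M)).mul_left a).congr
      fun n => by ring_nf)
  refine ⟨p, hp, ?_, ?_⟩
  · rw [Metric.tendstoUniformlyOn_iff]
    intro ε hε
    filter_upwards [hδ.eventually (gt_mem_nhds hε)] with k hk x hx
    rw [dist_comm, Real.dist_eq]
    exact (hpδ k _ (fun n => inferInstance)
      (ae_abs_le_dirac_conv_convPow hρM (hsuppM x hx))).trans_lt hk
  · refine tendsto_iff_dist_tendsto_zero.2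
      (squeeze_zero (fun _ => dist_nonneg) (fun k => ?_) hδ)
    rw [Real.dist_eq]
    exact hpδ k _ (fun n => inferInstance) fun n => by
      simpa using ae_abs_le_convPow hρM (n + 1)

theorem fourier_approximation_of_fitness
    (f : ℝ → ℝ) (hf : Continuous f)
    (a b : ℝ) (ha : 0 < a)
    (hbound : ∀ x, |f x| ≤ a * Real.cosh (b * x))
    (l : ℝ) (hl : 0 < l)
    (ρ : Measure ℝ) (hρ : IsProbabilityMeasure ρ)
    (K : Set ℝ) (hK : IsCompact K) (hsupp : ρ Kᶜ = 0) :
    ∃ p : ℕ → (ℝ → ℝ),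
      (∀ k, IsTrigPoly (p k)) ∧
      TendstoUniformlyOn (fun k x => meanFitnessAt (p k) l ρ x)
        (meanFitnessAt f l ρ) atTop (msupp ρ) ∧
      Tendsto (fun k => meanFitness (p k) l ρ) atTop
        (nhds (meanFitness f l ρ)) :=
  fourier_approximation_of_fitness_general f hf a b hbound l ρ hρ K hK hsupp
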